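/- Let φ : ℝ → ℝ be convex and nonnegative, let r₀ ∈ ℝ and δ > 0, and set K := max(φ(r₀ + δ), φ(r₀ − δ)). If b is a subgradient of φ at r, i.e. φ(w) ≥ φ(r) + b·(w − r) for every w ∈ ℝ, then b·(r − r₀) ≥ δ·|b| − K. -/
import Mathlib

/-- Interior-point estimate for subgradients of a nonnegative convex function on `ℝ`:
if `b` is a subgradient of `φ` at `r` and `K := max (φ (r₀+δ)) (φ (r₀−δ))`, then
`b·(r − r₀) ≥ δ·|b| − K`. -/
theorem subgradient_interior_estimate
    (φ : ℝ → ℝ) (hconv : ConvexOn ℝ Set.univ φ) (hnonneg : ∀ r : ℝ, 0 ≤ φ r)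
    (r₀ δ : ℝ) (hδ : 0 < δ)
    (r b : ℝ) (hb : ∀ w : ℝ, φ r + b * (w - r) ≤ φ w) :
    δ * |b| - max (φ (r₀ + δ)) (φ (r₀ - δ)) ≤ b * (r - r₀) := by
  rcases le_or_gt 0 b with h | h
  · have h1 := hb (r₀ + δ)
    have h2 := le_max_left (φ (r₀ + δ)) (φ (r₀ - δ))
    have h3 := hnonneg r
    rw [abs_of_nonneg h]
    nlinarith
  · have h1 := hb (r₀ - δ)
    have h2 := le_max_right (φ (r₀ + δ)) (φ (r₀ - δ))
    have h3 := hnonneg r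
    rw [abs_of_neg h]
    nlinarith
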